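/- Let m ≥ 1 and let M ⊆ ℂ^m be a domain (open connected set) containing 0, and let 𝔻 = {z ∈ ℂ : |z| < 1} be the open unit disc. Let h : M × 𝔻 → ℂ be holomorphic jointly in (λ, z), and assume h(λ, 0) = 0 for every λ ∈ M. Let (λ_k) be a sequence in M with λ_k → 0, and let (ε_k) be a sequence of positive reals with ε_k → 0. For each k, let U_k denote the connected component containing 0 of the set {z ∈ 𝔻 : h(λ_k, z) ∈ D(0, ε_k)}, where D(0, ε_k) = {w ∈ ℂ : |w| < ε_k}. Then there exists a constant c > 0 such that for all sufficiently large k, the disc D(0, c·ε_k) is contained in U_k. -/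

import Mathlib

open Filter Metric Set Topology

/-!
Near `(0, 0)` the map `h` is bounded, say by `1` on `U × D(0, r)`. For every `λ ∈ U`, since
`h(λ, 0) = 0`, the Schwarz lemma applied to `z ↦ h(λ, z)` gives `|h(λ, z)| ≤ |z| / r` on
`D(0, r)`, uniformly in `λ`. Hence `D(0, r ε)` lies in `{z : |h(λ, z)| < ε}` once `λ` and `ε`
are small, and being connected and containing `0`, it lies in the component of `0`.
-/

theorem Metric.ball_subset_connectedComponentIn {E : Type*} [SeminormedAddCommGroup E]
    [NormedSpace ℝ E] {x : E} {r : ℝ} {S : Set E} (hS : ball x r ⊆ S) :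
    ball x r ⊆ connectedComponentIn S x := by
  rcases lt_or_ge 0 r with hr | hr
  · exact (convex_ball x r).isPreconnected.subset_connectedComponentIn (mem_ball_self hr) hS
  · simp [ball_eq_empty.2 hr]

section UniformSchwarz

variable {E : Type*} [TopologicalSpace E] {h : E × ℂ → ℂ} {p : E}

theorem exists_uniform_schwarz_bound (hcont : ContinuousAt h (p, 0))
    (hslice : ∀ᶠ x in 𝓝 (p, 0), DifferentiableAt ℂ (fun z => h (x.1, z)) x.2)
    (hfix : ∀ᶠ l in 𝓝 p, h (l, 0) = 0) :
    ∃ C > 0, ∃ r > 0, ∀ᶠ l in 𝓝 p, ∀ z ∈ ball (0 : ℂ) r, ‖h (l, z)‖ ≤ C * ‖z‖ := by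
  have hsmall : ∀ᶠ x in 𝓝 (p, 0), ‖h x‖ < 1 :=
    hcont.norm.eventually (gt_mem_nhds (by simp [hfix.self_of_nhds]))
  obtain ⟨u, hu, v, hv, huv⟩ := mem_nhds_prod_iff.1 (hslice.and hsmall)
  obtain ⟨r, hr, hrv⟩ := Metric.mem_nhds_iff.1 hv
  refine ⟨r⁻¹, inv_pos.2 hr, r, hr, ?_⟩
  filter_upwards [hu, hfix] with l hlu hl0 z hz
  have hd : DifferentiableOn ℂ (fun z => h (l, z)) (ball 0 r) := fun w hw =>
    (huv (a := (l, w)) ⟨hlu, hrv hw⟩).1.differentiableWithinAt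
  have hmaps : MapsTo (fun z => h (l, z)) (ball 0 r) (closedBall (h (l, 0)) 1) := fun w hw => by
    rw [hl0, mem_closedBall_zero_iff]
    exact (huv (a := (l, w)) ⟨hlu, hrv hw⟩).2.le
  simpa [hl0, div_eq_inv_mul] using Complex.dist_le_div_mul_dist_of_mapsTo_ball hd hmaps hz

theorem exists_ball_subset_ball_inter_preimage_ball (hcont : ContinuousAt h (p, 0))
    (hslice : ∀ᶠ x in 𝓝 (p, 0), DifferentiableAt ℂ (fun z => h (x.1, z)) x.2)
    (hfix : ∀ᶠ l in 𝓝 p, h (l, 0) = 0) :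
    ∃ c > 0, ∀ᶠ q in 𝓝 (p, (0 : ℝ)),
      ball (0 : ℂ) (c * q.2) ⊆ ball 0 1 ∩ (fun z => h (q.1, z)) ⁻¹' ball 0 q.2 := by
  obtain ⟨C, hC, r, hr, hbound⟩ := exists_uniform_schwarz_bound hcont hslice hfix
  refine ⟨C⁻¹, inv_pos.2 hC, ?_⟩
  have hε : ∀ᶠ ε in 𝓝 (0 : ℝ), C⁻¹ * ε < min r 1 :=
    ((continuous_const_mul C⁻¹).tendsto' 0 0 (mul_zero _)).eventually
      (gt_mem_nhds (lt_min hr one_pos))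
  filter_upwards [hbound.prodMk_nhds hε] with ⟨l, ε⟩ ⟨hl, hε⟩ z hz
  rw [mem_ball_zero_iff] at hz
  have hzr : ‖z‖ < min r 1 := hz.trans hε
  refine ⟨mem_ball_zero_iff.2 (hzr.trans_le (min_le_right _ _)), mem_ball_zero_iff.2 ?_⟩
  calc ‖h (l, z)‖ ≤ C * ‖z‖ := hl z (mem_ball_zero_iff.2 (hzr.trans_le (min_le_left _ _)))
    _ < C * (C⁻¹ * ε) := by gcongr
    _ = ε := by field_simp

end UniformSchwarz

theorem disk_in_component_of_preimage_general
    (m : ℕ)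
    (M : Set (Fin m → ℂ)) (hMopen : IsOpen M)
    (h0M : (0 : Fin m → ℂ) ∈ M)
    (h : (Fin m → ℂ) × ℂ → ℂ)
    (hhol : DifferentiableOn ℂ h (M ×ˢ ball (0 : ℂ) 1))
    (hfix : ∀ lam ∈ M, h (lam, 0) = 0)
    (lam : ℕ → (Fin m → ℂ))
    (hlamlim : Tendsto lam atTop (nhds 0))
    (eps : ℕ → ℝ)
    (hepslim : Tendsto eps atTop (nhds 0)) :
    ∃ c > (0 : ℝ), ∀ᶠ k in atTop,
      ball (0 : ℂ) (c * eps k) ⊆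
        connectedComponentIn
          {z : ℂ | z ∈ ball (0 : ℂ) 1 ∧ h (lam k, z) ∈ ball (0 : ℂ) (eps k)} 0 := by
  have hU : M ×ˢ ball (0 : ℂ) 1 ∈ 𝓝 ((0 : Fin m → ℂ), (0 : ℂ)) :=
    (hMopen.prod isOpen_ball).mem_nhds ⟨h0M, mem_ball_self one_pos⟩
  have hslice : ∀ᶠ x in 𝓝 ((0 : Fin m → ℂ), (0 : ℂ)),
      DifferentiableAt ℂ (fun z => h (x.1, z)) x.2 := by
    filter_upwards [hhol.eventually_differentiableAt hU] with x hx
    exact hx.comp x.2 ((differentiableAt_const _).prodMk differentiableAt_id)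
  obtain ⟨c, hc, hsub⟩ := exists_ball_subset_ball_inter_preimage_ball
    (hhol.differentiableAt hU).continuousAt hslice (mem_of_superset (hMopen.mem_nhds h0M) hfix)
  refine ⟨c, hc, ?_⟩
  filter_upwards [(hlamlim.prodMk_nhds hepslim).eventually hsub] with k hk
  exact Metric.ball_subset_connectedComponentIn hk

/-- Let `M ⊆ ℂ^m` be a domain containing `0` and let `h : M × 𝔻 → ℂ` be holomorphic
with `h(λ, 0) = 0` for all `λ ∈ M`. If `λ_k → 0` in `M` and `ε_k > 0` with
`ε_k → 0`, and `U_k` is the connected component containing `0` of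
`{z ∈ 𝔻 : h(λ_k, z) ∈ D(0, ε_k)}`, then there exists `c > 0` such that for all
sufficiently large `k`, `D(0, c * ε_k) ⊆ U_k`. -/
theorem disk_in_component_of_preimage
    (m : ℕ) (hm : 1 ≤ m)
    (M : Set (Fin m → ℂ)) (hMopen : IsOpen M) (hMconn : IsConnected M)
    (h0M : (0 : Fin m → ℂ) ∈ M)
    (h : (Fin m → ℂ) × ℂ → ℂ)
    (hhol : DifferentiableOn ℂ h (M ×ˢ ball (0 : ℂ) 1))
    (hfix : ∀ lam ∈ M, h (lam, 0) = 0)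
    (lam : ℕ → (Fin m → ℂ)) (hlamM : ∀ k, lam k ∈ M)
    (hlamlim : Tendsto lam atTop (nhds 0))
    (eps : ℕ → ℝ) (hepspos : ∀ k, 0 < eps k)
    (hepslim : Tendsto eps atTop (nhds 0)) :
    ∃ c > (0 : ℝ), ∀ᶠ k in atTop,
      ball (0 : ℂ) (c * eps k) ⊆
        connectedComponentIn
          {z : ℂ | z ∈ ball (0 : ℂ) 1 ∧ h (lam k, z) ∈ ball (0 : ℂ) (eps k)} 0 :=
  disk_in_component_of_preimage_general m M hMopen h0M h hhol hfix lam hlamlim eps hepslim
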